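/- arXiv:2403.09248 — 4 statements merged into one kernel-verified Lean document; each statement's English description precedes it below -/
import Mathlib

section
/- Let G be a finite simple graph. Then rank(EMH_{2,2}(G)) ≤ 6·c(G,C_3) + 4·c(G,C_4) + 2·c(G,F_4), where C_3 and C_4 are the cycle graphs on 3 and 4 vertices and F_4 is the graph on 4 vertices obtained from C_4 by adding one diagonal (4 vertices and 5 edges). -/
open scoped Classical

variable {V : Type*}

/-- Length of the walk described by a list of landmarks: sum of path-metric
distances between consecutive entries (`⊤`-valued if some pair is unreachable). -/
noncomputable def mlen (G : SimpleGraph V) : List V → ℕ∞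
  | [] => 0
  | [_] => 0
  | a :: b :: t => G.edist a b + mlen G (b :: t)

/-- A list of landmarks is a trail if consecutive entries are distinct and reachable. -/
def IsTrailList (G : SimpleGraph V) (l : List V) : Prop :=
  l.Chain' fun a b => a ≠ b ∧ G.Reachable a b

/-- `trails G k ℓ` is the set `T_{k,ℓ}(G)` of `k`-trails of length `ℓ`,
encoded as lists with `k+1` entries. -/
def trails (G : SimpleGraph V) (k ℓ : ℕ) : Set (List V) :=
  {l | l.length = k + 1 ∧ IsTrailList G l ∧ mlen G l = (ℓ : ℕ∞)}

/-- `etrails G k ℓ` is the set `ET_{k,ℓ}(G)` of eulerian `k`-trails of length `ℓ`. -/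
def etrails (G : SimpleGraph V) (k ℓ : ℕ) : Set (List V) :=
  {l | l ∈ trails G k ℓ ∧ l.Nodup}

/-- Boundary of a single generator: `∂_{·,ℓ}(x₀,…,x_k) = Σ_{i=1}^{k-1} (-1)^i ∂^i`,
where `∂^i` deletes the `i`-th landmark if this does not change the length. -/
noncomputable def bdryElt (G : SimpleGraph V) (ℓ : ℕ) (l : List V) : List V →₀ ℤ :=
  ∑ i ∈ Finset.Ioo 0 (l.length - 1),
    if mlen G (l.eraseIdx i) = (ℓ : ℕ∞) then ((-1 : ℤ) ^ i) • Finsupp.single (l.eraseIdx i) 1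
    else 0

/-- The magnitude differential (length parameter `ℓ`) on the ambient free abelian group
on all landmark lists.  Its restriction to `MC_{k,ℓ}(G)` (chains supported on
`trails G k ℓ`) is `∂_{k,ℓ}`. -/
noncomputable def bdry (G : SimpleGraph V) (ℓ : ℕ) : (List V →₀ ℤ) →ₗ[ℤ] (List V →₀ ℤ) :=
  Finsupp.lsum ℤ fun l => LinearMap.toSpanSingleton ℤ _ (bdryElt G ℓ l)

/-- `MC_{k,ℓ}(G)`: the free abelian group on `T_{k,ℓ}(G)`, realized as the submodule of
finitely supported `ℤ`-valued functions supported on trails. -/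
noncomputable def MC (G : SimpleGraph V) (k ℓ : ℕ) : Submodule ℤ (List V →₀ ℤ) :=
  Finsupp.supported ℤ ℤ (trails G k ℓ)

/-- `EMC_{k,ℓ}(G)`: the free abelian group on `ET_{k,ℓ}(G)`. -/
noncomputable def EMC (G : SimpleGraph V) (k ℓ : ℕ) : Submodule ℤ (List V →₀ ℤ) :=
  Finsupp.supported ℤ ℤ (etrails G k ℓ)

/-- `EMH_{k,k}(G) = ker(∂_{k,k}|_{EMC_{k,k}(G)})`, the first-diagonal eulerian magnitude
homology group (`EMC_{k+1,k}(G) = 0`, so homology is just the kernel). -/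
noncomputable def EMHkk (G : SimpleGraph V) (k : ℕ) : Submodule ℤ (List V →₀ ℤ) :=
  EMC G k k ⊓ LinearMap.ker (bdry G k)

/-- `MH_{k,k}(G) = ker(∂_{k,k}|_{MC_{k,k}(G)})`. -/
noncomputable def MHkk (G : SimpleGraph V) (k : ℕ) : Submodule ℤ (List V →₀ ℤ) :=
  MC G k k ⊓ LinearMap.ker (bdry G k)

/-- `β_{k,k}(G)`, the rank of `EMH_{k,k}(G)`. -/
noncomputable def emBetti (G : SimpleGraph V) (k : ℕ) : ℕ :=
  Module.finrank ℤ (EMHkk G k)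

/-- `c(G,H)`: the number of vertex subsets of `G` whose induced subgraph is isomorphic
to `H`. -/
noncomputable def subgraphCount (G : SimpleGraph V) {W : Type*} (H : SimpleGraph W) : ℕ :=
  Set.ncard {s : Set V | Nonempty ((G.induce s) ≃g H)}

/-- `F₄`: the cycle graph on 4 vertices with one diagonal added (4 vertices, 5 edges). -/
def F4 : SimpleGraph (Fin 4) :=
  SimpleGraph.cycleGraph 4 ⊔ SimpleGraph.fromRel fun a b => a = 0 ∧ b = 2

/-!
A cycle of `EMC_{2,2}` is a combination of paths `[a, b, c]` with `a ~ b ~ c` and `a ≠ c`,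
and the differential sends `[a, b, c]` to `-[a, c]` when `d(a, c) = 2` and to `0` when `a ~ c`.
Fix a midpoint `m(a, c)` for every pair at distance two. The coefficient of `[a, c]` in the
boundary of a chain supported on the paths `[a, m(a, c), c]` is minus that of
`[a, m(a, c), c]`, so a cycle is determined by its coefficients on the other paths, and the rank
is at most their number. Those with `a ~ c` are the ordered triangles, six per induced `C₃`.
For the others, `b ≠ m(a, c)` and `{a, b, c, m(a, c)}` induces `C₄` or `F₄` according as
`b ≁ m(a, c)` or `b ~ m(a, c)`; the path is recovered from this set and the ordered
non-adjacent pair `(a, c)` in it, of which `C₄` has four and `F₄` two.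
-/

open SimpleGraph Function

lemma finrank_le_ncard_of_eq_zero {R ι : Type*} [Ring R] [StrongRankCondition R]
    {N : Submodule R (ι →₀ R)} {S : Set ι} (hS : S.Finite)
    (h : ∀ f ∈ N, (∀ i ∈ S, f i = 0) → f = 0) : Module.finrank R N ≤ S.ncard := by
  have := hS.fintype
  let restrict : N →ₗ[R] (S → R) :=
    LinearMap.funLeft R R Subtype.val ∘ₗ Finsupp.lcoeFun ∘ₗ N.subtype
  have hinj : Function.Injective restrict := fun f g hfg => by
    refine Subtype.ext (sub_eq_zero.mp (h _ (N.sub_mem f.2 g.2) fun i hi => ?_))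
    simpa [restrict, sub_eq_zero] using congr_fun hfg ⟨i, hi⟩
  calc Module.finrank R N ≤ Module.finrank R (S → R) :=
        LinearMap.finrank_le_finrank_of_injective hinj
    _ = S.ncard := by
      rw [Module.finrank_fintype_fun_eq_card, ← Nat.card_eq_fintype_card, Nat.card_coe_set_eq]

namespace SimpleGraph

variable {W : Type*} {G : SimpleGraph V} {H : SimpleGraph W}

def Iso.dartEquiv (e : G ≃g H) : G.Dart ≃ H.Dart where
  toFun := e.toHom.mapDart
  invFun := e.symm.toHom.mapDart
  left_inv d := by ext <;> simp
  right_inv d := by ext <;> simp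

def Iso.compl (e : G ≃g H) : Gᶜ ≃g Hᶜ where
  toEquiv := e.toEquiv
  map_rel_iff' := by simp [e.injective.ne_iff, e.map_adj_iff]

lemma induce_compl (s : Set V) : Gᶜ.induce s = (G.induce s)ᶜ := by
  ext x y
  simp [Subtype.ext_iff]

lemma nonempty_induce_compl_iso_compl_iff {s : Set V} :
    Nonempty (Gᶜ.induce s ≃g Hᶜ) ↔ Nonempty (G.induce s ≃g H) := by
  rw [induce_compl]
  refine ⟨fun ⟨e⟩ => ?_, fun ⟨e⟩ => ⟨e.compl⟩⟩
  simpa only [compl_compl] using Nonempty.intro e.compl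

lemma nonempty_induce_iso_of_range_eq {f : W → V} {s : Set V} (hs : Set.range f = s)
    (hf : Injective f) (hadj : ∀ i j, G.Adj (f i) (f j) ↔ H.Adj i j) :
    Nonempty (G.induce s ≃g H) :=
  hs ▸ ⟨(Embedding.isoInduceRange ⟨⟨f, hf⟩, hadj _ _⟩).symm⟩

lemma nonempty_induce_iso_cycleGraph_three {a b c : V} (hab : G.Adj a b) (hbc : G.Adj b c)
    (hac : G.Adj a c) : Nonempty (G.induce {a, b, c} ≃g cycleGraph 3) := by
  have hinj : Injective ![a, b, c] := by
    intro i j h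
    fin_cases i <;> fin_cases j <;>
      simp_all [hab.ne, hbc.ne, hac.ne, hab.ne.symm, hbc.ne.symm, hac.ne.symm]
  refine nonempty_induce_iso_of_range_eq (by simp only [Matrix.range_cons, Matrix.range_empty,
    Set.union_empty, Set.singleton_union]) hinj ?_
  intro i j
  fin_cases i <;> fin_cases j <;> simp [hab, hbc, hac, hab.symm, hbc.symm, hac.symm] <;> decide

lemma nonempty_induce_iso_cycleGraph_four {a b c d : V} (hab : G.Adj a b) (hbc : G.Adj b c)
    (hcd : G.Adj c d) (hda : G.Adj d a) (hac : ¬G.Adj a c) (hbd : ¬G.Adj b d) (hac' : a ≠ c)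
    (hbd' : b ≠ d) : Nonempty (G.induce {a, b, c, d} ≃g cycleGraph 4) := by
  have hinj : Injective ![a, b, c, d] := by
    intro i j h
    fin_cases i <;> fin_cases j <;>
      simp_all [hab.ne, hbc.ne, hcd.ne, hda.ne, hab.ne.symm, hbc.ne.symm, hcd.ne.symm, hda.ne.symm,
        hac'.symm, hbd'.symm]
  refine nonempty_induce_iso_of_range_eq (by simp only [Matrix.range_cons, Matrix.range_empty,
    Set.union_empty, Set.singleton_union]) hinj ?_
  intro i j
  fin_cases i <;> fin_cases j <;>
    simp [hab, hbc, hcd, hda, hab.symm, hbc.symm, hcd.symm, hda.symm, hac, hbd,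
      G.adj_comm c a, G.adj_comm d b] <;> decide

instance : DecidableRel F4.Adj := by unfold F4; infer_instance

lemma nonempty_induce_iso_F4 {a b c d : V} (hab : G.Adj a b) (hbc : G.Adj b c)
    (hcd : G.Adj c d) (hda : G.Adj d a) (hac : G.Adj a c) (hbd : ¬G.Adj b d) (hbd' : b ≠ d) :
    Nonempty (G.induce {a, b, c, d} ≃g F4) := by
  have hinj : Injective ![a, b, c, d] := by
    intro i j h
    fin_cases i <;> fin_cases j <;>
      simp_all [hab.ne, hbc.ne, hcd.ne, hda.ne, hab.ne.symm, hbc.ne.symm, hcd.ne.symm, hda.ne.symm,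
        hac.ne, hac.ne.symm, hbd'.symm]
  refine nonempty_induce_iso_of_range_eq (by simp only [Matrix.range_cons, Matrix.range_empty,
    Set.union_empty, Set.singleton_union]) hinj ?_
  intro i j
  fin_cases i <;> fin_cases j <;>
    simp [hab, hbc, hcd, hda, hab.symm, hbc.symm, hcd.symm, hda.symm, hac, hac.symm, hbd,
      G.adj_comm d b] <;> decide

end SimpleGraph

section InducedCopies

variable {W : Type*}

lemma subgraphCount_compl (G : SimpleGraph V) (H : SimpleGraph W) :
    subgraphCount Gᶜ Hᶜ = subgraphCount G H := by
  simp only [subgraphCount, nonempty_induce_compl_iso_compl_iff]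

variable [Fintype V]

def copyDarts (G : SimpleGraph V) (H : SimpleGraph W) : Set (Set V × V × V) :=
  {(s, x, y) : Set V × V × V | Nonempty (G.induce s ≃g H) ∧ x ∈ s ∧ y ∈ s ∧ G.Adj x y}

lemma ncard_copyDarts_le (G : SimpleGraph V) (H : SimpleGraph W) :
    (copyDarts G H).ncard ≤ Nat.card H.Dart * subgraphCount G H := by
  let g : (Σ s : {s : Set V // Nonempty (G.induce s ≃g H)}, (G.induce s.1).Dart) →
      Set V × V × V := fun x => (x.1.1, x.2.fst, x.2.snd)
  have hsub : copyDarts G H ⊆ Set.range g := by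
    rintro ⟨s, x, y⟩ ⟨hs, hx, hy, hxy⟩
    exact ⟨⟨⟨s, hs⟩, ⟨(⟨x, hx⟩, ⟨y, hy⟩), hxy⟩⟩, rfl⟩
  calc (copyDarts G H).ncard ≤ (Set.range g).ncard := Set.ncard_le_ncard hsub
    _ ≤ Nat.card (Σ s : {s : Set V // Nonempty (G.induce s ≃g H)}, (G.induce s.1).Dart) := by
      rw [← Nat.card_coe_set_eq]; exact Finite.card_range_le g
    _ = Nat.card H.Dart * subgraphCount G H := by
      rw [Nat.card_sigma, Finset.sum_congr rfl fun s _ => Nat.card_congr s.2.some.dartEquiv,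
        Finset.sum_const, Finset.card_univ, ← Nat.card_eq_fintype_card, smul_eq_mul, mul_comm,
        subgraphCount, ← Nat.card_coe_set_eq]
      rfl

end InducedCopies

section Triples

noncomputable def chosenMid (G : SimpleGraph V) (a c : V) : V :=
  if h : (G.commonNeighbors a c).Nonempty then h.some else a

lemma chosenMid_mem_commonNeighbors {G : SimpleGraph V} {a c : V}
    (h : (G.commonNeighbors a c).Nonempty) :
    chosenMid G a c ∈ G.commonNeighbors a c := by
  rw [chosenMid, dif_pos h]
  exact h.some_mem

def triangleTriples (G : SimpleGraph V) : Set (V × V × V) :=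
  {(a, b, c) : V × V × V | G.Adj a b ∧ G.Adj b c ∧ G.Adj a c}

def unchosenMidTriples (G : SimpleGraph V) : Set (V × V × V) :=
  {(a, b, c) : V × V × V |
    G.Adj a b ∧ G.Adj b c ∧ ¬G.Adj a c ∧ a ≠ c ∧ b ≠ chosenMid G a c}

variable [Fintype V]

lemma ncard_triangleTriples_le (G : SimpleGraph V) :
    (triangleTriples G).ncard ≤ 6 * subgraphCount G (cycleGraph 3) := by
  have hdarts : Nat.card (cycleGraph 3).Dart = 6 := by
    rw [Nat.card_eq_fintype_card, dart_card_eq_twice_card_edges]; decide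
  calc (triangleTriples G).ncard ≤ (copyDarts G (cycleGraph 3)).ncard := by
        refine Set.ncard_le_ncard_of_injOn (fun (a, b, c) => ({b, a, c}, a, c)) ?_ ?_
          (Set.toFinite _)
        · rintro ⟨a, b, c⟩ ⟨hab, hbc, hac⟩
          exact ⟨nonempty_induce_iso_cycleGraph_three hab.symm hac hbc, by simp, by simp, hac⟩
        · rintro ⟨a, b, c⟩ ⟨hab, hbc, -⟩ ⟨a', b', c'⟩ - h
          simp only [Prod.mk.injEq] at h
          obtain ⟨hs, rfl, rfl⟩ := h
          rw [Set.insert_inj (by simp [hab.ne.symm, hbc.ne])] at hs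
          rw [hs]
    _ ≤ 6 * subgraphCount G (cycleGraph 3) :=
      (ncard_copyDarts_le _ _).trans_eq (by rw [hdarts])

lemma ncard_unchosenMidTriples_le (G : SimpleGraph V) :
    (unchosenMidTriples G).ncard ≤
      4 * subgraphCount G (cycleGraph 4) + 2 * subgraphCount G F4 := by
  have hC4 : Nat.card (cycleGraph 4)ᶜ.Dart = 4 := by
    rw [Nat.card_eq_fintype_card, dart_card_eq_twice_card_edges]; decide
  have hF4 : Nat.card F4ᶜ.Dart = 2 := by
    rw [Nat.card_eq_fintype_card, dart_card_eq_twice_card_edges]; decide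
  calc (unchosenMidTriples G).ncard
      ≤ (copyDarts Gᶜ (cycleGraph 4)ᶜ ∪ copyDarts Gᶜ F4ᶜ).ncard := by
        -- `b, a, m, c` is a 4-cycle with diagonals `bm` and `ac`; the ordered non-adjacent
        -- pairs of an induced copy of `H` are the darts of the complement of `H`.
        refine Set.ncard_le_ncard_of_injOn (fun (a, b, c) => ({b, a, chosenMid G a c, c}, a, c))
          ?_ ?_ (Set.toFinite _)
        · rintro ⟨a, b, c⟩ ⟨hab, hbc, hac, hac', hbm⟩
          obtain ⟨ham, hcm⟩ := G.mem_commonNeighbors.mp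
            (chosenMid_mem_commonNeighbors ⟨b, G.mem_commonNeighbors.mpr ⟨hab, hbc.symm⟩⟩)
          have hd : Gᶜ.Adj a c := (compl_adj G a c).mpr ⟨hac', hac⟩
          by_cases hbm' : G.Adj b (chosenMid G a c)
          · refine Or.inr ⟨nonempty_induce_compl_iso_compl_iff.mpr ?_, by simp, by simp, hd⟩
            exact nonempty_induce_iso_F4 hab.symm ham hcm.symm hbc.symm hbm' hac hac'
          · refine Or.inl ⟨nonempty_induce_compl_iso_compl_iff.mpr ?_, by simp, by simp, hd⟩
            exact nonempty_induce_iso_cycleGraph_four hab.symm ham hcm.symm hbc.symm hbm' hac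
              hbm hac'
        · rintro ⟨a, b, c⟩ ⟨hab, hbc, -, -, hbm⟩ ⟨a', b', c'⟩ - h
          simp only [Prod.mk.injEq] at h
          obtain ⟨hs, rfl, rfl⟩ := h
          rw [Set.insert_inj (by simp [hab.ne.symm, hbc.ne, hbm])] at hs
          rw [hs]
    _ ≤ (copyDarts Gᶜ (cycleGraph 4)ᶜ).ncard + (copyDarts Gᶜ F4ᶜ).ncard :=
      Set.ncard_union_le _ _
    _ ≤ 4 * subgraphCount G (cycleGraph 4) + 2 * subgraphCount G F4 := by
      refine add_le_add ?_ ?_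
      · exact (ncard_copyDarts_le _ _).trans_eq (by rw [hC4, subgraphCount_compl])
      · exact (ncard_copyDarts_le _ _).trans_eq (by rw [hF4, subgraphCount_compl])

end Triples

section Homology

variable {G : SimpleGraph V}

lemma mem_etrails_two_two {l : List V} :
    l ∈ etrails G 2 2 ↔ ∃ a b c, l = [a, b, c] ∧ G.Adj a b ∧ G.Adj b c ∧ a ≠ c := by
  constructor
  · rintro ⟨⟨hlen, htrail, hmlen⟩, hnodup⟩
    obtain ⟨a, b, c, rfl⟩ : ∃ a b c, l = [a, b, c] := by
      match l, hlen with
      | [a, b, c], _ => exact ⟨a, b, c, rfl⟩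
    change List.IsChain _ [a, b, c] at htrail
    simp only [List.isChain_cons_cons, List.isChain_singleton, and_true] at htrail
    obtain ⟨⟨hab, rab⟩, hbc, rbc⟩ := htrail
    have hsum : G.dist a b + G.dist b c = 2 := by
      simp only [mlen, add_zero, ← rab.coe_dist_eq_edist, ← rbc.coe_dist_eq_edist] at hmlen
      exact_mod_cast hmlen
    have h1 := rab.pos_dist_of_ne hab
    have h2 := rbc.pos_dist_of_ne hbc
    refine ⟨a, b, c, rfl, dist_eq_one_iff_adj.mp (by omega), dist_eq_one_iff_adj.mp (by omega),
      ?_⟩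
    rintro rfl
    simp at hnodup
  · rintro ⟨a, b, c, rfl, hab, hbc, hac⟩
    refine ⟨⟨rfl, ?_, ?_⟩, by simp [hab.ne, hbc.ne, hac]⟩
    · change List.IsChain _ [a, b, c]
      simp only [List.isChain_cons_cons, List.isChain_singleton, and_true]
      exact ⟨⟨hab.ne, hab.reachable⟩, hbc.ne, hbc.reachable⟩
    · simp only [mlen, edist_eq_one_iff_adj.mpr hab, edist_eq_one_iff_adj.mpr hbc]
      rfl

lemma bdryElt_two_triple (a b c : V) :
    bdryElt G 2 [a, b, c] = if G.edist a c = 2 then -Finsupp.single [a, c] 1 else 0 := by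
  have hIoo : Finset.Ioo 0 ([a, b, c].length - 1) = {1} := show Finset.Ioo 0 2 = {1} by decide
  simp only [bdryElt, hIoo, Finset.sum_singleton, List.eraseIdx_cons_succ, List.eraseIdx_cons_zero,
    mlen, add_zero, Nat.cast_ofNat]
  split_ifs <;> simp

lemma bdry_two_apply_pair {f : List V →₀ ℤ}
    (hf : ∀ l ∈ f.support, ∃ a c, l = [a, chosenMid G a c, c] ∧ G.edist a c = 2) {a c : V}
    (hl : [a, chosenMid G a c, c] ∈ f.support) :
    bdry G 2 f [a, c] = -f [a, chosenMid G a c, c] := by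
  have hac : G.edist a c = 2 := by
    obtain ⟨a', c', hl', hd⟩ := hf _ hl
    simp only [List.cons.injEq, and_true] at hl'
    obtain ⟨rfl, -, rfl⟩ := hl'
    exact hd
  rw [bdry, Finsupp.lsum_apply, Finsupp.sum, Finsupp.finsetSum_apply,
    Finset.sum_eq_single_of_mem _ hl]
  · simp [bdryElt_two_triple, hac]
  · intro l hl hne
    obtain ⟨a', c', rfl, hd⟩ := hf l hl
    have hpair : [a', c'] ≠ [a, c] := by
      simp only [ne_eq, List.cons.injEq, and_true]
      rintro ⟨rfl, rfl⟩
      exact hne rfl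
    simp [bdryElt_two_triple, hd, hpair]

lemma eq_zero_of_mem_EMHkk_two {f : List V →₀ ℤ} (hf : f ∈ EMHkk G 2)
    (hvanish : ∀ a b c, (a, b, c) ∈ triangleTriples G ∪ unchosenMidTriples G →
      f [a, b, c] = 0) :
    f = 0 := by
  obtain ⟨hmem, hker⟩ := hf
  have hsupp : ∀ l ∈ f.support, ∃ a c, l = [a, chosenMid G a c, c] ∧ G.edist a c = 2 := by
    intro l hl
    obtain ⟨a, b, c, rfl, hab, hbc, hac⟩ :=
      mem_etrails_two_two.mp ((Finsupp.mem_supported ℤ f).mp hmem hl)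
    have hfl : f [a, b, c] ≠ 0 := Finsupp.mem_support_iff.mp hl
    have hnac : ¬G.Adj a c := fun h => hfl (hvanish a b c (Or.inl ⟨hab, hbc, h⟩))
    have hb : b = chosenMid G a c := by
      by_contra h
      exact hfl (hvanish a b c (Or.inr ⟨hab, hbc, hnac, hac, h⟩))
    refine ⟨a, c, hb ▸ rfl, edist_eq_two_iff.mpr ⟨hac, hnac, b, ?_⟩⟩
    exact G.mem_commonNeighbors.mpr ⟨hab, hbc.symm⟩
  ext l
  by_contra hne
  have hl : l ∈ f.support := Finsupp.mem_support_iff.mpr hne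
  obtain ⟨a, c, rfl, -⟩ := hsupp l hl
  have hzero := bdry_two_apply_pair hsupp hl
  rw [show bdry G 2 f = 0 from hker] at hzero
  exact hne (by simpa using hzero.symm)

end Homology

/-- Lemma 3.6: for a finite simple graph `G`,
`rank EMH_{2,2}(G) ≤ 6·c(G,C₃) + 4·c(G,C₄) + 2·c(G,F₄)`. -/
theorem rank_emh22_le {V : Type*} [Fintype V] (G : SimpleGraph V) :
    Module.finrank ℤ (EMHkk G 2) ≤
      6 * subgraphCount G (SimpleGraph.cycleGraph 3) +
      4 * subgraphCount G (SimpleGraph.cycleGraph 4) +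
      2 * subgraphCount G F4 := by
  let toList : V × V × V → List V := fun (a, b, c) => [a, b, c]
  let T := triangleTriples G ∪ unchosenMidTriples G
  calc Module.finrank ℤ (EMHkk G 2) ≤ (toList '' T).ncard :=
        finrank_le_ncard_of_eq_zero (Set.toFinite _) fun f hf hS =>
          eq_zero_of_mem_EMHkk_two hf fun a b c h => hS _ ⟨(a, b, c), h, rfl⟩
    _ ≤ T.ncard := Set.ncard_image_le (Set.toFinite _)
    _ ≤ (triangleTriples G).ncard + (unchosenMidTriples G).ncard := Set.ncard_union_le _ _
    _ ≤ _ := by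
      have := ncard_triangleTriples_le G
      have := ncard_unchosenMidTriples_le G
      omega
end

section
/- Let G be a finite simple graph, k ≥ 1, and let Z = {x̄ ∈ ET_{k,k}(G) : ∂_{k,k}(x̄) = 0}; equivalently, Z is the set of injective (k+1)-tuples (x_0,…,x_k) of vertices with x_i adjacent to x_{i+1} for all 0 ≤ i ≤ k−1 and x_{i−1} adjacent to x_{i+1} for all 1 ≤ i ≤ k−1. Then (k+1)!·c(G,Δ_{k+1}) ≤ |Z|, i.e., c(G,Δ_{k+1}) ≤ ⌊|Z|/(k+1)!⌋, where Δ_{k+1} is the complete graph on k+1 vertices. -/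
open scoped Classical

variable {V : Type*}

/-!
Every ordering `(x₀, …, x_k)` of a `(k+1)`-clique is an eulerian `k`-trail of length `k`, and
its differential vanishes: deleting an interior landmark leaves a list of pairwise adjacent
vertices, whose length `k - 1` differs from `k`. Distinct cliques give disjoint sets of
orderings, each of size `(k+1)!`, and the induced copies of `Δ_{k+1}` are exactly the cliques.
-/

open Finset

theorem mlen_eq_length_sub_one_of_isChain (G : SimpleGraph V) :
    ∀ {l : List V}, l.IsChain G.Adj → mlen G l = ((l.length - 1 : ℕ) : ℕ∞)
  | [], _ => by simp [mlen]
  | [_], _ => by simp [mlen]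
  | a :: b :: t, h => by
    obtain ⟨hab, ht⟩ := List.isChain_cons_cons.1 h
    rw [mlen, mlen_eq_length_sub_one_of_isChain G ht, SimpleGraph.edist_eq_one_iff_adj.2 hab]
    simp only [List.length_cons, Nat.add_sub_cancel]
    push_cast
    ring

theorem bdry_single (G : SimpleGraph V) (ℓ : ℕ) (l : List V) :
    bdry G ℓ (Finsupp.single l 1) = bdryElt G ℓ l := by
  rw [bdry, Finsupp.lsum_single, LinearMap.toSpanSingleton_apply_one]

theorem bdryElt_eq_zero_of_pairwise_adj (G : SimpleGraph V) {l : List V}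
    (hl : l.Pairwise G.Adj) : bdryElt G (l.length - 1) l = 0 := by
  refine Finset.sum_eq_zero fun i hi => if_neg ?_
  rw [Finset.mem_Ioo] at hi
  have hlen : (l.eraseIdx i).length = l.length - 1 := List.length_eraseIdx_of_lt (by omega)
  rw [mlen_eq_length_sub_one_of_isChain G (hl.sublist (List.eraseIdx_sublist l i)).isChain,
    hlen, Nat.cast_inj]
  omega

theorem mem_etrails_of_pairwise_adj (G : SimpleGraph V) {k : ℕ} {l : List V}
    (hl : l.Pairwise G.Adj) (hlen : l.length = k + 1) : l ∈ etrails G k k := by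
  refine ⟨⟨hlen, hl.isChain.imp fun _ _ hab => ⟨hab.ne, hab.reachable⟩, ?_⟩, hl.imp (·.ne)⟩
  rw [mlen_eq_length_sub_one_of_isChain G hl.isChain, hlen, Nat.add_sub_cancel]

theorem card_biUnion_toList_permutations (S : Finset (Finset V)) :
    #(S.biUnion fun s => s.toList.permutations.toFinset) = ∑ s ∈ S, (#s).factorial := by
  rw [card_biUnion]
  · refine sum_congr rfl fun s _ => ?_
    rw [List.toFinset_card_of_nodup (List.nodup_permutations _ s.nodup_toList),
      List.length_permutations, length_toList]
  · intro s _ t _ hst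
    refine disjoint_left.2 fun l hls hlt => hst ?_
    rw [List.mem_toFinset, List.mem_permutations] at hls hlt
    ext x
    rw [← mem_toList, ← hls.mem_iff, hlt.mem_iff, mem_toList]

section Cliques

variable [Fintype V] (G : SimpleGraph V)

noncomputable def cliqueOrderings (n : ℕ) : Finset (List V) :=
  (G.cliqueFinset n).biUnion fun s => s.toList.permutations.toFinset

theorem card_cliqueOrderings (n : ℕ) :
    #(cliqueOrderings G n) = n.factorial * #(G.cliqueFinset n) := by
  rw [cliqueOrderings, card_biUnion_toList_permutations,
    sum_congr rfl fun s hs => by rw [(G.mem_cliqueFinset_iff.1 hs).card_eq], sum_const,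
    smul_eq_mul, Nat.mul_comm]

theorem pairwise_adj_of_mem_cliqueOrderings {n : ℕ} {l : List V}
    (hl : l ∈ cliqueOrderings G n) : l.Pairwise G.Adj ∧ l.length = n := by
  obtain ⟨s, hs, hls⟩ := mem_biUnion.1 hl
  rw [List.mem_toFinset, List.mem_permutations] at hls
  have hs := G.mem_cliqueFinset_iff.1 hs
  refine ⟨(hls.nodup_iff.2 s.nodup_toList).pairwise_of_forall_ne fun a ha b hb hab => ?_, ?_⟩
  · exact hs.isClique (by simpa using hls.subset ha) (by simpa using hls.subset hb) hab
  · rw [hls.length_eq, length_toList, hs.card_eq]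

theorem isNClique_of_nonempty_induce_iso_top {n : ℕ} {s : Set V}
    (h : Nonempty (G.induce s ≃g (⊤ : SimpleGraph (Fin n)))) : G.IsNClique n s.toFinset := by
  obtain ⟨e⟩ := h
  have htop : G.induce s = ⊤ := by
    ext a b
    rw [← e.map_adj_iff, SimpleGraph.top_adj, SimpleGraph.top_adj, e.injective.ne_iff]
  refine ⟨by simpa using G.induce_eq_top.1 htop, ?_⟩
  rw [Set.toFinset_card, Fintype.card_congr e.toEquiv, Fintype.card_fin]

theorem subgraphCount_top_le_card_cliqueFinset (n : ℕ) :
    subgraphCount G (⊤ : SimpleGraph (Fin n)) ≤ #(G.cliqueFinset n) := by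
  rw [← Set.ncard_coe_finset]
  refine Set.ncard_le_ncard_of_injOn (fun s => s.toFinset)
    (fun s hs => G.mem_cliqueFinset_iff.2 (isNClique_of_nonempty_induce_iso_top G hs)) ?_
  intro s _ t _ hst
  simpa using hst

theorem cliqueOrderings_subset_zero_bdry (k : ℕ) :
    ↑(cliqueOrderings G (k + 1)) ⊆
      {l : List V | l ∈ etrails G k k ∧ bdry G k (Finsupp.single l 1) = 0} := by
  intro l hl
  obtain ⟨hadj, hlen⟩ := pairwise_adj_of_mem_cliqueOrderings G hl
  refine ⟨mem_etrails_of_pairwise_adj G hadj hlen, ?_⟩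
  simpa only [bdry_single, hlen, Nat.add_sub_cancel] using bdryElt_eq_zero_of_pairwise_adj G hadj

end Cliques

theorem clique_count_le_zero_differential_generators_general {V : Type*} [Fintype V]
    (G : SimpleGraph V) (k : ℕ) :
    (k + 1).factorial * subgraphCount G (⊤ : SimpleGraph (Fin (k + 1))) ≤
      Set.ncard {l : List V | l ∈ etrails G k k ∧ bdry G k (Finsupp.single l 1) = 0} ∧
    subgraphCount G (⊤ : SimpleGraph (Fin (k + 1))) ≤
      Set.ncard {l : List V | l ∈ etrails G k k ∧ bdry G k (Finsupp.single l 1) = 0} /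
        (k + 1).factorial := by
  set Z := {l : List V | l ∈ etrails G k k ∧ bdry G k (Finsupp.single l 1) = 0}
  have hZ : Z.Finite := (List.finite_length_eq V (k + 1)).subset fun _ hl => hl.1.1.1
  have hcount : (k + 1).factorial * subgraphCount G (⊤ : SimpleGraph (Fin (k + 1))) ≤ Z.ncard :=
    calc _ ≤ (k + 1).factorial * #(G.cliqueFinset (k + 1)) :=
          Nat.mul_le_mul_left _ (subgraphCount_top_le_card_cliqueFinset G _)
      _ = (cliqueOrderings G (k + 1) : Set (List V)).ncard := by
          rw [Set.ncard_coe_finset, card_cliqueOrderings]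
      _ ≤ Z.ncard := Set.ncard_le_ncard (cliqueOrderings_subset_zero_bdry G k) hZ
  exact ⟨hcount, (Nat.le_div_iff_mul_le (Nat.factorial_pos _)).2 (by rwa [Nat.mul_comm])⟩

/-- Lemma 3.7: let `Z ⊆ ET_{k,k}(G)` be the set of generators with
vanishing differential.  Then `(k+1)!·c(G,Δ_{k+1}) ≤ |Z|`, i.e.
`c(G,Δ_{k+1}) ≤ ⌊|Z|/(k+1)!⌋`, where `Δ_{k+1}` is the complete graph on `k+1` vertices. -/
theorem clique_count_le_zero_differential_generators {V : Type*} [Fintype V]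
    (G : SimpleGraph V) (k : ℕ) (hk : 1 ≤ k) :
    (k + 1).factorial * subgraphCount G (⊤ : SimpleGraph (Fin (k + 1))) ≤
      Set.ncard {l : List V | l ∈ etrails G k k ∧ bdry G k (Finsupp.single l 1) = 0} ∧
    subgraphCount G (⊤ : SimpleGraph (Fin (k + 1))) ≤
      Set.ncard {l : List V | l ∈ etrails G k k ∧ bdry G k (Finsupp.single l 1) = 0} /
        (k + 1).factorial :=
  clique_count_le_zero_differential_generators_general G k
end

section
/- Let G=(V,E) be a simple graph and suppose x̄=(x_0,…,x_k) ∈ ET_{k,k}(G) satisfies ∂_{k,k}(x̄) = 0. Then the induced subgraph of G on the landmark set L(x̄) = {x_0,…,x_k} contains every edge {x_i,x_{i+1}} for 0 ≤ i ≤ k−1 and every edge {x_{i−1},x_{i+1}} for 1 ≤ i ≤ k−1; that is, G|_{L(x̄)} belongs to the class Γ(𝓗({x̄})) of the complete class graph 𝓗({x̄}) = (L(x̄), E_S, E_B) with mandatory edges E_S = {{x_i,x_{i+1}} : 0 ≤ i ≤ k−1} ∪ {{x_{i−1},x_{i+1}} : 1 ≤ i ≤ k−1} and optional edges E_B all remaining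 pairs of L(x̄). -/
open scoped Classical

variable {V : Type*}

/-!
A trail of length `k` with `k` steps walks only along edges, which gives the consecutive edges.
If `x_{i-1}` and `x_{i+1}` were not adjacent, `x_{i-1} x_i x_{i+1}` would be a geodesic, so
deleting `x_i` would keep the length `k`. The landmarks being distinct, the faces `∂^i x̄` are
pairwise distinct generators, so `∂x̄` would have coefficient `±1` at this face.
-/

lemma List.eq_take_append_getElem_cons_cons_cons {α : Type*} (l : List α) {j : ℕ}
    (h : j + 2 < l.length) :
    l = l.take j ++ l[j] :: l[j + 1] :: l[j + 2] :: l.drop (j + 3) := by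
  rw [← List.drop_eq_getElem_cons, ← List.drop_eq_getElem_cons, ← List.drop_eq_getElem_cons,
    List.take_append_drop]

lemma List.eraseIdx_succ_eq_take_append_getElem_cons_cons {α : Type*} (l : List α) {j : ℕ}
    (h : j + 2 < l.length) :
    l.eraseIdx (j + 1) = l.take j ++ l[j] :: l[j + 2] :: l.drop (j + 3) := by
  rw [List.eraseIdx_eq_take_drop_succ, List.take_add_one, List.getElem?_eq_getElem (by omega),
    ← List.drop_eq_getElem_cons (by omega), Option.toList_some, List.append_assoc,
    List.singleton_append]

lemma List.Nodup.eraseIdx_ne_eraseIdx {α : Type*} {l : List α} (hl : l.Nodup) {i j : ℕ}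
    (hi : i < l.length) (hij : i ≠ j) : l.eraseIdx i ≠ l.eraseIdx j := by
  intro heq
  have hmem : l[i] ∈ l.eraseIdx j := List.mem_eraseIdx_iff_getElem.mpr ⟨i, hi, hij, rfl⟩
  obtain ⟨m, _, hmi, hval⟩ := List.mem_eraseIdx_iff_getElem.mp (heq ▸ hmem)
  exact hmi (hl.getElem_inj_iff.mp hval)

namespace SimpleGraph

variable (G : SimpleGraph V)

lemma mlen_cons_cons (a b : V) (t : List V) :
    mlen G (a :: b :: t) = G.edist a b + mlen G (b :: t) := rfl

lemma isTrailList_cons_cons {a b : V} {t : List V} :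
    IsTrailList G (a :: b :: t) ↔ (a ≠ b ∧ G.Reachable a b) ∧ IsTrailList G (b :: t) :=
  List.isChain_cons_cons

variable {G}

lemma length_sub_one_le_mlen :
    ∀ {l : List V}, IsTrailList G l → ((l.length - 1 : ℕ) : ℕ∞) ≤ mlen G l
  | [], _ | [_], _ => by simp [mlen]
  | a :: b :: t, h => by
    rw [isTrailList_cons_cons] at h
    have hab : 1 ≤ G.edist a b := Order.one_le_iff_pos.mpr (edist_pos_of_ne h.1.1)
    have ht := length_sub_one_le_mlen h.2
    simp only [List.length_cons, Nat.add_sub_cancel, Nat.cast_add, Nat.cast_one] at ht ⊢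
    rw [mlen_cons_cons, add_comm]
    gcongr

lemma isChain_adj_of_mlen_eq :
    ∀ {l : List V}, IsTrailList G l → mlen G l = ((l.length - 1 : ℕ) : ℕ∞) → l.IsChain G.Adj
  | [], _, _ | [_], _, _ => by simp
  | a :: b :: t, h, hm => by
    rw [isTrailList_cons_cons] at h
    have hab : 1 ≤ G.edist a b := Order.one_le_iff_pos.mpr (edist_pos_of_ne h.1.1)
    have ht := length_sub_one_le_mlen h.2
    simp only [List.length_cons, Nat.add_sub_cancel] at ht hm
    rw [mlen_cons_cons] at hm
    have hab_fin : G.edist a b ≠ ⊤ := fun h ↦ ENat.top_ne_natCast _ (by rwa [h, top_add] at hm)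
    have ht_fin : mlen G (b :: t) ≠ ⊤ := fun h ↦ ENat.top_ne_natCast _ (by rwa [h, add_top] at hm)
    lift G.edist a b to ℕ using hab_fin with d hd
    lift mlen G (b :: t) to ℕ using ht_fin with m hm'
    norm_cast at hab ht hm
    refine List.IsChain.cons_cons ?_ (isChain_adj_of_mlen_eq h.2 ?_)
    · rw [← edist_eq_one_iff_adj, ← hd]
      exact_mod_cast (by omega : d = 1)
    · rw [← hm']
      exact_mod_cast (by omega : m = t.length)

variable (G) in
lemma mlen_append_add_edist :
    ∀ (p : List V) (a b c : V) (s : List V),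
      mlen G (p ++ a :: b :: c :: s) + G.edist a c
        = mlen G (p ++ a :: c :: s) + G.edist a b + G.edist b c
  | [], a, b, c, s => by
    simp only [List.nil_append, mlen_cons_cons]
    ring
  | [q], a, b, c, s => by
    simp only [List.cons_append, List.nil_append, mlen_cons_cons]
    ring
  | q :: r :: p, a, b, c, s => by
    have ih := mlen_append_add_edist (r :: p) a b c s
    simp only [List.cons_append] at ih ⊢
    rw [mlen_cons_cons, mlen_cons_cons G q r, add_assoc (G.edist q r), ih]
    ring

variable (G) in
/-- Deleting `l[i]` changes the length by `d(l[i-1], l[i+1]) - d(l[i-1], l[i]) - d(l[i], l[i+1])`;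
stated additively since `ℕ∞` has no subtraction to speak of. -/
lemma mlen_add_edist_eq_mlen_eraseIdx_add {l : List V} {i : ℕ} (hi0 : 0 < i)
    (hi : i + 1 < l.length) :
    mlen G l + G.edist l[i - 1] l[i + 1]
      = mlen G (l.eraseIdx i) + G.edist l[i - 1] l[i] + G.edist l[i] l[i + 1] := by
  obtain ⟨j, rfl⟩ : ∃ j, i = j + 1 := ⟨i - 1, by omega⟩
  simp only [Nat.add_sub_cancel]
  have h := mlen_append_add_edist G (l.take j) l[j] l[j + 1] l[j + 2] (l.drop (j + 3))
  rwa [← l.eq_take_append_getElem_cons_cons_cons hi,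
    ← l.eraseIdx_succ_eq_take_append_getElem_cons_cons hi] at h

variable (G) in
lemma bdry_single_apply_eraseIdx (ℓ : ℕ) {l : List V} (hl : l.Nodup) {i : ℕ} (hi0 : 0 < i)
    (hi : i + 1 < l.length) :
    bdry G ℓ (Finsupp.single l 1) (l.eraseIdx i)
      = if mlen G (l.eraseIdx i) = (ℓ : ℕ∞) then (-1) ^ i else 0 := by
  rw [bdry, Finsupp.lsum_single, LinearMap.toSpanSingleton_apply, one_smul, bdryElt,
    Finsupp.finsetSum_apply, Finset.sum_eq_single_of_mem i (Finset.mem_Ioo.mpr ⟨hi0, by omega⟩)]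
  · split_ifs <;> simp
  · intro j hj hji
    have hne := hl.eraseIdx_ne_eraseIdx (by have := (Finset.mem_Ioo.mp hj).2; omega) hji
    split_ifs <;> simp [hne]

lemma mlen_eraseIdx_ne_of_bdry_single_eq_zero {ℓ : ℕ} {l : List V} (hl : l.Nodup)
    (hcyc : bdry G ℓ (Finsupp.single l 1) = 0) {i : ℕ} (hi0 : 0 < i) (hi : i + 1 < l.length) :
    mlen G (l.eraseIdx i) ≠ (ℓ : ℕ∞) := by
  intro hm
  have h := bdry_single_apply_eraseIdx G ℓ hl hi0 hi
  rw [hcyc, if_pos hm] at h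
  exact pow_ne_zero i (neg_ne_zero.mpr one_ne_zero) h.symm

lemma adj_getElem_sub_one_getElem_add_one {ℓ : ℕ} {l : List V} (hl : l.Nodup)
    (hadj : l.IsChain G.Adj) (hm : mlen G l = ℓ) (hcyc : bdry G ℓ (Finsupp.single l 1) = 0)
    {i : ℕ} (hi0 : 0 < i) (hi : i + 1 < l.length) :
    G.Adj l[i - 1] l[i + 1] := by
  by_contra hna
  have hadj₁ : G.Adj l[i - 1] l[i] := by
    simpa [Nat.sub_add_cancel hi0] using List.isChain_iff_getElem.mp hadj (i - 1) (by omega)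
  have hadj₂ : G.Adj l[i] l[i + 1] := List.isChain_iff_getElem.mp hadj i hi
  have hne : l[i - 1] ≠ l[i + 1] := fun h ↦ by have := hl.getElem_inj_iff.mp h; omega
  have htwo : G.edist l[i - 1] l[i + 1] = 2 :=
    edist_eq_two_iff.mpr ⟨hne, hna, l[i], hadj₁, hadj₂.symm⟩
  have h := mlen_add_edist_eq_mlen_eraseIdx_add G hi0 hi
  rw [hm, htwo, edist_eq_one_iff_adj.mpr hadj₁, edist_eq_one_iff_adj.mpr hadj₂, add_assoc,
    one_add_one_eq_two] at h
  replace h := ENat.add_left_injective_of_ne_top (by decide) h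
  exact mlen_eraseIdx_ne_of_bdry_single_eq_zero hl hcyc hi0 hi h.symm

end SimpleGraph

/-- Lemma 3.8: if `x̄ = (x_0,…,x_k) ∈ ET_{k,k}(G)` has `∂_{k,k}(x̄) = 0`,
then the induced subgraph of `G` on the landmark set contains all consecutive edges
`{x_i, x_{i+1}}` and all "skip" edges `{x_{i-1}, x_{i+1}}`; that is, `G|_{L(x̄)}` belongs to
the class `Γ(𝓗({x̄}))` of the complete class graph whose mandatory edge set `E_S` consists
of exactly those edges (all remaining pairs of landmarks being optional). -/
theorem class_graph_of_single_generator_cycle {V : Type*} (G : SimpleGraph V) (k : ℕ)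
    (x : Fin (k + 1) → V) (hx : List.ofFn x ∈ etrails G k k)
    (hcyc : bdry G k (Finsupp.single (List.ofFn x) 1) = 0) :
    (∀ i : Fin k, G.Adj (x i.castSucc) (x i.succ)) ∧
    (∀ i : ℕ, ∀ _hi1 : 1 ≤ i, ∀ _hi2 : i ≤ k - 1,
      G.Adj (x ⟨i - 1, by omega⟩) (x ⟨i + 1, by omega⟩)) := by
  obtain ⟨⟨-, htrail, hm⟩, hnodup⟩ := hx
  have hadj : (List.ofFn x).IsChain G.Adj := SimpleGraph.isChain_adj_of_mlen_eq htrail (by simpa using hm)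
  refine ⟨fun i ↦ ?_, fun i hi1 hi2 ↦ ?_⟩
  · exact List.isChain_ofFn.mp hadj i (by omega)
  · have h := SimpleGraph.adj_getElem_sub_one_getElem_add_one hnodup hadj hm hcyc hi1
      (by rw [List.length_ofFn]; omega)
    rwa [List.getElem_ofFn, List.getElem_ofFn] at h
end

section
/- Fix an integer k ≥ 2 and let G=(V,E) be a finite simple graph such that EMH_{n,n}(G) = 0 (equivalently, ker(∂_{n,n} : EMC_{n,n}(G) → EMC_{n−1,n}(G)) = 0) for every 2 ≤ n ≤ k. Then the rank of ker(∂_{k,k} : MC_{k,k}(G) → MC_{k−1,k}(G)) equals 2·|E|; that is, rank(MH_{k,k}(G)) = 2|E| = rank(MH_{1,1}(G)). -/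
open scoped Classical

variable {V : Type*}

/-!
If `EMH_{2,2}(G) = 0` then `G` has no triangle (a triangle `(x,y,z)` is itself a cycle) and two
distinct vertices have at most one common neighbour (two paths `(x,y,z)`, `(x,y',z)` differ by a
cycle). Chains in `MC_{k,k}(G)` are supported on walks along edges. If such a walk `w` has
`w[j] ≠ w[j+2]`, deleting `w[j+1]` keeps the length `k`, and `w` is the only walk with a face
of this shape, so the coefficient of `w` in a cycle vanishes. Hence `MH_{k,k}(G)` is free on the
zigzags `(a,b,a,b,…)`, which are cycles since every deletion shortens them by two; they
correspond to the `2|E|` darts of `G`.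
-/

lemma ENat.eq_one_and_eq_of_add_eq {x y : ℕ∞} {n : ℕ} (hx : 1 ≤ x) (hy : (n : ℕ∞) ≤ y)
    (h : x + y = (n + 1 : ℕ)) : x = 1 ∧ y = n := by
  lift x to ℕ using fun hx => by simp [hx] at h; norm_cast at h
  lift y to ℕ using fun hy => by simp [hy] at h; norm_cast at h
  norm_cast at *
  omega

section Length

variable {G : SimpleGraph V}

lemma mlen_cons_cons (a b : V) (t : List V) :
    mlen G (a :: b :: t) = G.edist a b + mlen G (b :: t) := rfl

lemma mlen_eq_of_isChain_adj :
    ∀ {l : List V}, l.IsChain G.Adj → mlen G l = (l.length - 1 : ℕ)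
  | [], _ | [_], _ => rfl
  | a :: b :: t, h => by
    rw [List.isChain_cons_cons] at h
    rw [mlen_cons_cons, mlen_eq_of_isChain_adj h.2, SimpleGraph.edist_eq_one_iff_adj.mpr h.1]
    push_cast [List.length_cons]
    ring

lemma length_sub_one_le_mlen :
    ∀ {l : List V}, IsTrailList G l → ((l.length - 1 : ℕ) : ℕ∞) ≤ mlen G l
  | [], _ | [_], _ => by simp
  | a :: b :: t, h => by
    replace h := List.isChain_cons_cons.mp h
    rw [mlen_cons_cons]
    calc (((a :: b :: t).length - 1 : ℕ) : ℕ∞) = 1 + ((b :: t).length - 1 : ℕ) := by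
          push_cast [List.length_cons]; ring
      _ ≤ G.edist a b + mlen G (b :: t) :=
        add_le_add (Order.one_le_iff_pos.mpr (G.edist_pos_of_ne h.1.1))
          (length_sub_one_le_mlen h.2)

lemma isChain_adj_of_mlen_eq :
    ∀ {l : List V}, IsTrailList G l → mlen G l = (l.length - 1 : ℕ) → l.IsChain G.Adj
  | [], _, _ => List.isChain_nil
  | [_], _, _ => List.isChain_singleton _
  | a :: b :: t, h, hm => by
    replace h := List.isChain_cons_cons.mp h
    rw [mlen_cons_cons] at hm
    obtain ⟨hab, hbt⟩ := ENat.eq_one_and_eq_of_add_eq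
      (Order.one_le_iff_pos.mpr (G.edist_pos_of_ne h.1.1)) (length_sub_one_le_mlen h.2) hm
    rw [List.isChain_cons_cons]
    exact ⟨SimpleGraph.edist_eq_one_iff_adj.mp hab, isChain_adj_of_mlen_eq h.2 hbt⟩

lemma mem_trails_self_iff {k : ℕ} {l : List V} :
    l ∈ trails G k k ↔ l.length = k + 1 ∧ l.IsChain G.Adj := by
  constructor
  · rintro ⟨hlen, htrail, hm⟩
    exact ⟨hlen, isChain_adj_of_mlen_eq htrail (by simp [hm, hlen])⟩
  · rintro ⟨hlen, hc⟩
    refine ⟨hlen, hc.imp fun a b hab => ⟨hab.ne, hab.reachable⟩, ?_⟩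
    simp [mlen_eq_of_isChain_adj hc, hlen]

lemma mlen_append_cons : ∀ (p : List V) (a : V) (q : List V),
    mlen G (p ++ a :: q) = mlen G (p ++ [a]) + mlen G (a :: q)
  | [], _, _ => by simp [mlen]
  | [x], a, q => by simp [mlen_cons_cons, mlen]
  | x :: y :: p, a, q => by
    simp only [List.cons_append, mlen_cons_cons] at *
    rw [← List.cons_append, mlen_append_cons (y :: p) a q, add_assoc]
    rfl

lemma mlen_eraseIdx_of_isChain_adj {w : List V} (hw : w.IsChain G.Adj) {j : ℕ}
    (hj : j + 2 < w.length) :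
    mlen G (w.eraseIdx (j + 1)) = j + G.edist w[j] w[j + 2] + (w.length - (j + 3) : ℕ) := by
  have htake : w.take (j + 1) = w.take j ++ [w[j]] := List.take_succ_eq_append_getElem (by omega)
  have hdrop : w.drop (j + 2) = w[j + 2] :: w.drop (j + 3) := List.drop_eq_getElem_cons hj
  have hsplit : w.eraseIdx (j + 1) = w.take j ++ w[j] :: w[j + 2] :: w.drop (j + 3) := by
    rw [List.eraseIdx_eq_take_drop_succ, htake, hdrop, List.append_assoc, List.singleton_append]
  have hpre : (w.take j ++ [w[j]]).length - 1 = j := by simp; omega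
  have hsuf : (w[j + 2] :: w.drop (j + 3)).length - 1 = w.length - (j + 3) := by simp; omega
  rw [hsplit, mlen_append_cons, mlen_cons_cons, mlen_eq_of_isChain_adj (htake ▸ hw.take _),
    mlen_eq_of_isChain_adj (hdrop ▸ hw.drop _), hpre, hsuf, add_assoc]

end Length

section Boundary

variable {G : SimpleGraph V} {ℓ : ℕ}

lemma bdry_single_one (l : List V) : bdry G ℓ (Finsupp.single l 1) = bdryElt G ℓ l := by
  rw [bdry, Finsupp.lsum_single, LinearMap.toSpanSingleton_apply, one_smul]

lemma bdry_apply (c : List V →₀ ℤ) (y : List V) :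
    bdry G ℓ c y = ∑ l ∈ c.support, c l * bdryElt G ℓ l y := by
  simp only [bdry, Finsupp.lsum_apply, Finsupp.sum, Finsupp.finsetSum_apply,
    LinearMap.toSpanSingleton_apply, Finsupp.smul_apply, smul_eq_mul]

lemma bdryElt_eq_zero {l : List V}
    (h : ∀ i ∈ Finset.Ioo 0 (l.length - 1), mlen G (l.eraseIdx i) ≠ ℓ) :
    bdryElt G ℓ l = 0 :=
  Finset.sum_eq_zero fun i hi => if_neg (h i hi)

lemma bdryElt_apply_eq_zero {l y : List V}
    (h : ∀ i ∈ Finset.Ioo 0 (l.length - 1), l.eraseIdx i ≠ y) : bdryElt G ℓ l y = 0 := by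
  rw [bdryElt, Finsupp.finsetSum_apply]
  refine Finset.sum_eq_zero fun i hi => ?_
  split_ifs
  · simp [h i hi]
  · rfl

lemma bdryElt_apply_eraseIdx {w : List V} {i : ℕ} (hi : i ∈ Finset.Ioo 0 (w.length - 1))
    (hℓ : mlen G (w.eraseIdx i) = ℓ)
    (huniq : ∀ j ∈ Finset.Ioo 0 (w.length - 1), w.eraseIdx j = w.eraseIdx i → j = i) :
    bdryElt G ℓ w (w.eraseIdx i) = (-1) ^ i := by
  rw [bdryElt, Finsupp.finsetSum_apply, Finset.sum_eq_single_of_mem i hi, if_pos hℓ]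
  · simp
  · intro j hj hji
    split_ifs
    · simpa [Finsupp.single_apply] using fun h => hji (huniq j hj h)
    · rfl

lemma supported_le_ker_bdry {S : Set (List V)} (h : ∀ l ∈ S, bdryElt G ℓ l = 0) :
    Finsupp.supported ℤ ℤ S ≤ LinearMap.ker (bdry G ℓ) := by
  intro c hc
  ext y
  rw [bdry_apply]
  exact Finset.sum_eq_zero fun l hl => by simp [h l (hc hl)]

lemma bdry_apply_eraseIdx_of_unique {c : List V →₀ ℤ} {w : List V} {i : ℕ}
    (hi : i ∈ Finset.Ioo 0 (w.length - 1)) (hℓ : mlen G (w.eraseIdx i) = ℓ)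
    (huniq : ∀ l ∈ c.support, ∀ j ∈ Finset.Ioo 0 (l.length - 1),
      l.eraseIdx j = w.eraseIdx i → l = w ∧ j = i) :
    bdry G ℓ c (w.eraseIdx i) = c w * (-1) ^ i := by
  rw [bdry_apply, Finset.sum_eq_single w]
  · by_cases hw : w ∈ c.support
    · rw [bdryElt_apply_eraseIdx hi hℓ fun j hj h => (huniq w hw j hj h).2]
    · rw [Finsupp.notMem_support_iff.mp hw, zero_mul, zero_mul]
  · exact fun l hl hlw => by
      rw [bdryElt_apply_eq_zero fun j hj h => hlw (huniq l hl j hj h).1, mul_zero]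
  · intro hw
    rw [Finsupp.notMem_support_iff.mp hw, zero_mul]

end Boundary

section DegreeTwo

variable {G : SimpleGraph V}

lemma triple_mem_etrails {x y z : V} (hxy : G.Adj x y) (hyz : G.Adj y z) (hxz : x ≠ z) :
    [x, y, z] ∈ etrails G 2 2 := by
  refine ⟨⟨rfl, ?_, ?_⟩, by simp [hxy.ne, hxz, hyz.ne]⟩
  · exact List.isChain_cons_cons.mpr ⟨⟨hxy.ne, hxy.reachable⟩,
      List.isChain_pair.mpr ⟨hyz.ne, hyz.reachable⟩⟩
  · simp [mlen, SimpleGraph.edist_eq_one_iff_adj.mpr hxy,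
      SimpleGraph.edist_eq_one_iff_adj.mpr hyz, one_add_one_eq_two]

lemma bdryElt_triple (ℓ : ℕ) (x y z : V) :
    bdryElt G ℓ [x, y, z] = if G.edist x z = ℓ then -Finsupp.single [x, z] 1 else 0 := by
  have hmid : Finset.Ioo 0 ([x, y, z].length - 1) = {1} := rfl
  simp only [bdryElt, hmid, Finset.sum_singleton, List.eraseIdx_cons_succ,
    List.eraseIdx_cons_zero, mlen_cons_cons, mlen, add_zero]
  split_ifs <;> simp

lemma single_triple_mem_EMHkk_two {x y z : V} (hxy : G.Adj x y) (hyz : G.Adj y z)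
    (hxz : G.Adj x z) : Finsupp.single [x, y, z] 1 ∈ EMHkk G 2 := by
  refine ⟨Finsupp.single_mem_supported ℤ 1 (triple_mem_etrails hxy hyz hxz.ne), ?_⟩
  rw [SetLike.mem_coe, LinearMap.mem_ker, bdry_single_one, bdryElt_triple,
    SimpleGraph.edist_eq_one_iff_adj.mpr hxz, if_neg (by decide)]

lemma not_adj_of_EMHkk_two_eq_bot (h2 : EMHkk G 2 = ⊥) {x y z : V} (hxy : G.Adj x y)
    (hyz : G.Adj y z) : ¬ G.Adj x z := fun hxz => by
  simpa [h2] using single_triple_mem_EMHkk_two hxy hyz hxz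

lemma eq_of_EMHkk_two_eq_bot (h2 : EMHkk G 2 = ⊥) {x y y' z : V} (hxy : G.Adj x y)
    (hyz : G.Adj y z) (hxy' : G.Adj x y') (hy'z : G.Adj y' z) (hxz : x ≠ z) : y = y' := by
  have hcycle : Finsupp.single [x, y, z] (1 : ℤ) - Finsupp.single [x, y', z] 1 ∈ EMHkk G 2 := by
    refine ⟨Submodule.sub_mem _
      (Finsupp.single_mem_supported ℤ 1 (triple_mem_etrails hxy hyz hxz))
      (Finsupp.single_mem_supported ℤ 1 (triple_mem_etrails hxy' hy'z hxz)), ?_⟩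
    rw [SetLike.mem_coe, LinearMap.mem_ker, map_sub, bdry_single_one, bdry_single_one,
      bdryElt_triple, bdryElt_triple, sub_self]
  rw [h2, Submodule.mem_bot, sub_eq_zero] at hcycle
  simpa using Finsupp.single_left_injective one_ne_zero hcycle

lemma edist_eq_two_of_EMHkk_two_eq_bot (h2 : EMHkk G 2 = ⊥) {x y z : V} (hxy : G.Adj x y)
    (hyz : G.Adj y z) (hxz : x ≠ z) : G.edist x z = 2 :=
  SimpleGraph.edist_eq_two_iff.mpr ⟨hxz, not_adj_of_EMHkk_two_eq_bot h2 hxy hyz,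
    ⟨y, G.mem_commonNeighbors.mpr ⟨hxy, hyz.symm⟩⟩⟩

end DegreeTwo

section Zigzag

variable {G : SimpleGraph V}

def zigzag (a b : V) (k : ℕ) : List V :=
  List.ofFn fun i : Fin (k + 1) => if Even (i : ℕ) then a else b

@[simp]
lemma length_zigzag (a b : V) (k : ℕ) : (zigzag a b k).length = k + 1 :=
  List.length_ofFn

@[simp]
lemma getElem_zigzag (a b : V) (k i : ℕ) (h : i < (zigzag a b k).length) :
    (zigzag a b k)[i] = if Even i then a else b :=
  List.getElem_ofFn ..

lemma getElem_zigzag_add_two (a b : V) (k j : ℕ) (h : j + 2 < (zigzag a b k).length) :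
    (zigzag a b k)[j + 2] = (zigzag a b k)[j] := by
  simp [Nat.even_add]

lemma isChain_adj_zigzag {a b : V} (hab : G.Adj a b) (k : ℕ) :
    (zigzag a b k).IsChain G.Adj := by
  refine List.isChain_iff_getElem.mpr fun i hi => ?_
  rcases Nat.even_or_odd i with hi | hi
  · simpa [hi, Nat.even_add_one] using hab
  · simpa [Nat.not_even_iff_odd.mpr hi, Nat.even_add_one] using hab.symm

def zigzags (G : SimpleGraph V) (k : ℕ) : Set (List V) :=
  Set.range fun d : G.Dart => zigzag d.fst d.snd k

lemma zigzags_subset_trails (k : ℕ) : zigzags G k ⊆ trails G k k := by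
  rintro _ ⟨d, rfl⟩
  rw [mem_trails_self_iff]
  exact ⟨length_zigzag _ _ k, isChain_adj_zigzag d.adj k⟩

lemma zigzag_dart_injective {k : ℕ} (hk : 1 ≤ k) :
    Function.Injective fun d : G.Dart => zigzag d.fst d.snd k := by
  intro d d' h
  have h0 := List.getElem_of_eq h (i := 0) (by simp)
  have h1 := List.getElem_of_eq h (i := 1) (by simp; omega)
  simp only [getElem_zigzag, Even.zero, if_true, Nat.not_even_one, if_false] at h0 h1
  exact SimpleGraph.Dart.ext _ _ (Prod.ext h0 h1)

lemma mem_zigzags_of_getElem_add_two_eq {k : ℕ} (hk : 1 ≤ k) {l : List V}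
    (hlen : l.length = k + 1) (hl : l.IsChain G.Adj)
    (hzig : ∀ j (h : j + 2 < l.length), l[j + 2] = l[j]) : l ∈ zigzags G k := by
  have hperiod : ∀ i (h : i < l.length), l[i] = if Even i then l[0] else l[1] := by
    intro i
    induction i using Nat.twoStepInduction with
    | zero => simp
    | one => simp
    | more i ih _ => intro h; simp [hzig i h, ih (by omega), Nat.even_add]
  refine ⟨⟨(l[0], l[1]), List.isChain_iff_getElem.mp hl 0 (by omega)⟩, ?_⟩
  exact List.ext_getElem (by simp [hlen]) fun i _ h => by simp [hperiod i h]

lemma bdryElt_zigzag_eq_zero {a b : V} (hab : G.Adj a b) (k : ℕ) :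
    bdryElt G k (zigzag a b k) = 0 := by
  refine bdryElt_eq_zero fun i hi => ?_
  obtain ⟨j, rfl⟩ : ∃ j, i = j + 1 := ⟨i - 1, by simp at hi; omega⟩
  have hj : j + 2 < (zigzag a b k).length := by simp at hi ⊢; omega
  rw [mlen_eraseIdx_of_isChain_adj (isChain_adj_zigzag hab k) hj,
    ← getElem_zigzag_add_two a b k j hj, SimpleGraph.edist_self, add_zero, length_zigzag]
  norm_cast
  rw [length_zigzag] at hj
  omega

end Zigzag

section Cycles

variable {G : SimpleGraph V}

lemma adj_getElem_eraseIdx {l : List V} (hl : l.IsChain G.Adj) {i t : ℕ} (hti : t ≠ i)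
    (ht : t + 2 < l.length) :
    G.Adj ((l.eraseIdx (i + 1))[t]'(by rw [List.length_eraseIdx]; split <;> omega))
      ((l.eraseIdx (i + 1))[t + 1]'(by rw [List.length_eraseIdx]; split <;> omega)) := by
  have hadj := List.isChain_iff_getElem.mp hl
  rcases Nat.lt_or_gt_of_ne hti with h | h
  · rw [List.getElem_eraseIdx_of_lt _ (by omega), List.getElem_eraseIdx_of_lt _ (by omega)]
    exact hadj t (by omega)
  · rw [List.getElem_eraseIdx_of_ge _ (by omega), List.getElem_eraseIdx_of_ge _ (by omega)]
    exact hadj (t + 1) (by omega)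

/-- A walk `w` with `w[j] ≠ w[j+2]` is recovered from `w.eraseIdx (j+1)`: the gap left at `j` is
the only non-edge, and the deleted vertex is the unique common neighbour of its ends. -/
lemma eq_of_eraseIdx_eq (h2 : EMHkk G 2 = ⊥) {w l : List V} (hw : w.IsChain G.Adj)
    (hl : l.IsChain G.Adj) {i j : ℕ} (hi : i + 2 < l.length)
    (hj : j + 2 < w.length) (hne : w[j] ≠ w[j + 2])
    (h : l.eraseIdx (i + 1) = w.eraseIdx (j + 1)) : l = w ∧ i = j := by
  have hlen : l.length = w.length := by
    have := congrArg List.length h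
    rw [List.length_eraseIdx_of_lt (by omega), List.length_eraseIdx_of_lt (by omega)] at this
    omega
  have hwadj := List.isChain_iff_getElem.mp hw
  have hladj := List.isChain_iff_getElem.mp hl
  have hgap : ¬ G.Adj w[j] w[j + 2] :=
    not_adj_of_EMHkk_two_eq_bot h2 (hwadj j (by omega)) (hwadj (j + 1) (by omega))
  have hij : i = j := by
    by_contra hij
    have hy := adj_getElem_eraseIdx hl (Ne.symm hij) (t := j) (by omega)
    simp only [h] at hy
    rw [List.getElem_eraseIdx_of_lt _ (by omega), List.getElem_eraseIdx_of_ge _ le_rfl] at hy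
    exact hgap hy
  subst hij
  have hleft : l[i] = w[i] := by
    have := List.getElem_of_eq h (i := i) (by rw [List.length_eraseIdx_of_lt (by omega)]; omega)
    rwa [List.getElem_eraseIdx_of_lt _ (by omega), List.getElem_eraseIdx_of_lt _ (by omega)]
      at this
  have hright : l[i + 2] = w[i + 2] := by
    have := List.getElem_of_eq h (i := i + 1)
      (by rw [List.length_eraseIdx_of_lt (by omega)]; omega)
    rwa [List.getElem_eraseIdx_of_ge _ le_rfl, List.getElem_eraseIdx_of_ge _ le_rfl] at this
  have hmid : l[i + 1] = w[i + 1] :=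
    (eq_of_EMHkk_two_eq_bot h2 (hwadj i (by omega)) (hwadj (i + 1) (by omega))
      (hleft ▸ hladj i (by omega)) (hright ▸ hladj (i + 1) (by omega)) hne).symm
  refine ⟨?_, rfl⟩
  calc l = (l.eraseIdx (i + 1)).insertIdx (i + 1) l[i + 1] :=
        (List.insertIdx_eraseIdx_getElem _).symm
    _ = (w.eraseIdx (i + 1)).insertIdx (i + 1) w[i + 1] := by rw [h, hmid]
    _ = w := List.insertIdx_eraseIdx_getElem _

lemma apply_eq_zero_of_mem_MHkk (h2 : EMHkk G 2 = ⊥) {k : ℕ} {c : List V →₀ ℤ}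
    (hc : c ∈ MHkk G k) {w : List V} (hw : w ∈ trails G k k) {j : ℕ} (hj : j + 2 < w.length)
    (hne : w[j] ≠ w[j + 2]) : c w = 0 := by
  obtain ⟨hcMC, hcker⟩ := hc
  obtain ⟨hwlen, hw⟩ := mem_trails_self_iff.mp hw
  have hi : j + 1 ∈ Finset.Ioo 0 (w.length - 1) := by simp; omega
  have hℓ : mlen G (w.eraseIdx (j + 1)) = k := by
    rw [mlen_eraseIdx_of_isChain_adj hw hj, edist_eq_two_of_EMHkk_two_eq_bot h2
      (List.isChain_iff_getElem.mp hw j (by omega))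
      (List.isChain_iff_getElem.mp hw (j + 1) (by omega)) hne]
    norm_cast
    omega
  have hcoeff := bdry_apply_eraseIdx_of_unique (c := c) hi hℓ fun l hl i hi' heq => by
    have hlchain := (mem_trails_self_iff.mp (hcMC hl)).2
    obtain ⟨i, rfl⟩ : ∃ i', i = i' + 1 := ⟨i - 1, by simp at hi'; omega⟩
    obtain ⟨rfl, rfl⟩ := eq_of_eraseIdx_eq h2 hw hlchain (by simp at hi'; omega) hj hne heq
    exact ⟨rfl, rfl⟩
  rw [LinearMap.mem_ker.mp hcker, Finsupp.zero_apply, eq_comm] at hcoeff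
  exact (mul_eq_zero.mp hcoeff).resolve_right (pow_ne_zero _ (by norm_num))

lemma MHkk_eq_supported_zigzags (h2 : EMHkk G 2 = ⊥) {k : ℕ} (hk : 1 ≤ k) :
    MHkk G k = Finsupp.supported ℤ ℤ (zigzags G k) := by
  refine le_antisymm (fun c hc w hw => ?_) (le_inf ?_ ?_)
  · have hwt := hc.1 hw
    obtain ⟨hlen, hchain⟩ := mem_trails_self_iff.mp hwt
    by_contra hz
    obtain ⟨j, hj, hne⟩ : ∃ j, ∃ hj : j + 2 < w.length, w[j] ≠ w[j + 2] := by
      by_contra! hzig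
      exact hz (mem_zigzags_of_getElem_add_two_eq hk hlen hchain fun j hj => (hzig j hj).symm)
    exact Finsupp.mem_support_iff.mp hw (apply_eq_zero_of_mem_MHkk h2 hc hwt hj hne)
  · exact Finsupp.supported_mono (zigzags_subset_trails k)
  · exact supported_le_ker_bdry fun _ ⟨d, hd⟩ => hd ▸ bdryElt_zigzag_eq_zero d.adj k

end Cycles

lemma Finsupp.finrank_supported_self {α R : Type*} [Semiring R] [StrongRankCondition R]
    (S : Set α) : Module.finrank R (Finsupp.supported R R S) = Nat.card S :=
  Module.finrank_eq_nat_card_basis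
    (Finsupp.basisSingleOne.map (Finsupp.supportedEquivFinsupp S).symm)

lemma finrank_supported_zigzags [Fintype V] {G : SimpleGraph V} {k : ℕ} (hk : 1 ≤ k) :
    Module.finrank ℤ (Finsupp.supported ℤ ℤ (zigzags G k)) = 2 * G.edgeSet.ncard := by
  rw [Finsupp.finrank_supported_self, zigzags,
    Nat.card_range_of_injective (zigzag_dart_injective hk), Nat.card_eq_fintype_card,
    SimpleGraph.dart_card_eq_twice_card_edges,
    ← SimpleGraph.coe_edgeFinset, Set.ncard_coe_finset]

/-- Corollary to Theorem 3.20: if `EMH_{n,n}(G) = 0` for all `2 ≤ n ≤ k`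
(`k ≥ 2`) and `G` is finite, then `rank MH_{k,k}(G) = 2|E| = rank MH_{1,1}(G)`. -/
theorem rank_mh_eq_twice_edges {V : Type*} [Fintype V] (G : SimpleGraph V) (k : ℕ)
    (hk : 2 ≤ k) (hEMH : ∀ n, 2 ≤ n → n ≤ k → EMHkk G n = ⊥) :
    Module.finrank ℤ (MHkk G k) = 2 * G.edgeSet.ncard ∧
    Module.finrank ℤ (MHkk G 1) = 2 * G.edgeSet.ncard := by
  have h2 : EMHkk G 2 = ⊥ := hEMH 2 le_rfl hk
  rw [MHkk_eq_supported_zigzags h2 (by omega), MHkk_eq_supported_zigzags h2 le_rfl]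
  exact ⟨finrank_supported_zigzags (by omega), finrank_supported_zigzags le_rfl⟩
end
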